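/- Let G be a bounded open subset of ℂ, f : closure(G) → ℂ continuous, holomorphic on G, nonvanishing on ∂G, and suppose all zeros of f in G are simple. Then there exists δ > 0 such that every holomorphic f̃ on G, continuous on closure(G), with |f̃ − f| < δ on closure(G), also has only simple zeros in G. -/

import Mathlib

open Metric Set

/-- if all zeros of `f` in `G` are simple, then all zeros of any sufficiently
uniformly close holomorphic function are simple as well. -/
theorem stmt17 (G : Set ℂ) (hGo : IsOpen G) (hGb : Bornology.IsBounded G)
    (f : ℂ → ℂ) (hfc : ContinuousOn f (closure G)) (hfd : DifferentiableOn ℂ f G)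
    (hfb : ∀ z ∈ frontier G, f z ≠ 0)
    (hsimple : ∀ z ∈ G, f z = 0 → deriv f z ≠ 0) :
    ∃ δ > 0, ∀ g : ℂ → ℂ, ContinuousOn g (closure G) → DifferentiableOn ℂ g G →
      (∀ z ∈ closure G, ‖g z - f z‖ < δ) →
      ∀ z ∈ G, g z = 0 → deriv g z ≠ 0 := by
  classical
  have hGc : IsCompact (closure G) := hGb.isCompact_closure
  set K : Set ℂ := closure G ∩ f ⁻¹' {0} with hKdef
  have hKclosed : IsClosed K :=
    hfc.preimage_isClosed_of_isClosed isClosed_closure isClosed_singleton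
  have hKG : K ⊆ G := by
    intro z hz
    by_contra hzG
    have hzf : z ∈ frontier G := by
      rw [frontier, hGo.interior_eq]
      exact ⟨hz.1, hzG⟩
    exact hfb z hzf (by simpa using hz.2)
  have hKcomp : IsCompact K := hGc.of_isClosed_subset hKclosed inter_subset_left
  have hfa : AnalyticOnNhd ℂ f G := hfd.analyticOnNhd hGo
  have hdc : ContinuousOn (deriv f) G := hfa.deriv.continuousOn
  obtain ⟨c, hc0, hcK⟩ : ∃ c > 0, ∀ z ∈ K, c ≤ ‖deriv f z‖ := by
    rcases K.eq_empty_or_nonempty with h | h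
    · exact ⟨1, one_pos, by simp [h]⟩
    · obtain ⟨z0, hz0, hmin⟩ := hKcomp.exists_isMinOn h ((hdc.mono hKG).norm)
      refine ⟨‖deriv f z0‖, norm_pos_iff.2 (hsimple z0 (hKG hz0) (by simpa using hz0.2)), fun w hw => hmin hw⟩
  set U : Set ℂ := G ∩ (fun z => ‖deriv f z‖) ⁻¹' Ioi (c / 2) with hUdef
  have hUo : IsOpen U := hdc.norm.isOpen_inter_preimage hGo isOpen_Ioi
  have hKU : K ⊆ U := fun z hz => ⟨hKG hz, lt_of_lt_of_le (half_lt_self hc0) (hcK z hz)⟩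
  obtain ⟨r, hr0, hrU⟩ := hKcomp.exists_cthickening_subset_open hUo hKU
  have hr2 : (0 : ℝ) < r / 2 := by positivity
  set L : Set ℂ := closure G \ thickening (r / 2) K with hLdef
  have hLclosed : IsClosed L := isClosed_closure.sdiff isOpen_thickening
  have hLcomp : IsCompact L := hGc.of_isClosed_subset hLclosed diff_subset
  have hLf : ∀ z ∈ L, f z ≠ 0 := by
    intro z hz h0
    exact hz.2 (self_subset_thickening hr2 K ⟨hz.1, by simpa using h0⟩)
  obtain ⟨m, hm0, hmL⟩ : ∃ m > 0, ∀ z ∈ L, m ≤ ‖f z‖ := by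
    rcases L.eq_empty_or_nonempty with h | h
    · exact ⟨1, one_pos, by simp [h]⟩
    · obtain ⟨z0, hz0, hmin⟩ := hLcomp.exists_isMinOn h ((hfc.mono diff_subset).norm)
      exact ⟨‖f z0‖, norm_pos_iff.2 (hLf z0 hz0), fun w hw => hmin hw⟩
  refine ⟨min m (c * r / 4), lt_min hm0 (by positivity), ?_⟩
  intro g hgc hgd hclose z hzG hgz
  have hzc : z ∈ closure G := subset_closure hzG
  have hclose' : ∀ w ∈ closure G, ‖g w - f w‖ < min m (c * r / 4) := by
    intro w hw
    simpa using hclose w hw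
  have hzthick : z ∈ thickening (r / 2) K := by
    by_contra h
    have hzL : z ∈ L := ⟨hzc, h⟩
    have h2 : ‖f z‖ < m :=
      lt_of_lt_of_le (by simpa [hgz] using hclose' z hzc) (min_le_left _ _)
    exact absurd (hmL z hzL) (not_le.2 h2)
  have hball : closedBall z (r / 2) ⊆ U := by
    intro w hw
    apply hrU
    obtain ⟨y, hyK, hy⟩ := mem_thickening_iff.1 hzthick
    refine mem_cthickening_of_dist_le w y r K hyK ?_
    calc dist w y ≤ dist w z + dist z y := dist_triangle _ _ _
      _ ≤ r / 2 + r / 2 := add_le_add (mem_closedBall.1 hw) hy.le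
      _ = r := by ring
  have hballG : closedBall z (r / 2) ⊆ G := fun w hw => (hball hw).1
  have hfz : c / 2 < ‖deriv f z‖ := (hball (mem_closedBall_self hr2.le)).2
  have hdiff : DiffContOnCl ℂ (g - f) (ball z (r / 2)) := by
    refine ⟨(hgd.sub hfd).mono (ball_subset_closedBall.trans hballG), ?_⟩
    exact (hgc.sub hfc).mono
      (closure_ball_subset_closedBall.trans (hballG.trans subset_closure))
  have hest : ‖deriv (g - f) z‖ ≤ min m (c * r / 4) / (r / 2) := by
    apply Complex.norm_deriv_le_of_forall_mem_sphere_norm_le hr2 hdiff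
    intro w hw
    have hwG : w ∈ closure G := subset_closure (hballG (sphere_subset_closedBall hw))
    exact le_of_lt (by simpa using hclose' w hwG)
  have hderiv : deriv (g - f) z = deriv g z - deriv f z :=
    deriv_sub (hgd.differentiableAt (hGo.mem_nhds hzG))
      (hfd.differentiableAt (hGo.mem_nhds hzG))
  have hsmall : ‖deriv g z - deriv f z‖ ≤ c / 2 := by
    rw [← hderiv]
    refine hest.trans ?_
    rw [div_le_iff₀ hr2]
    have h1 : c / 2 * (r / 2) = c * r / 4 := by ring
    rw [h1]
    exact min_le_right _ _
  intro h0
  rw [h0, zero_sub, norm_neg] at hsmall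
  exact absurd hfz (not_lt.2 hsmall)
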